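/- Define ∂_x^{tr} : A/[A,A] → A on the class of a monomial a_1...a_n by Σ_{i : a_i = x} a_{i+1}...a_n a_1...a_{i-1}. Then this map is well defined on the trace space (i.e., it kills commutators), and for every a ∈ A it satisfies ∂_x^{tr}(tr(a)) = μ_flip(∂_x(a)), where μ_flip(b⊗c) = c·b. -/
import Mathlib


noncomputable section
open TensorProduct

abbrev A : Type := FreeAlgebra ℝ (Fin 2)
abbrev B : Type := A ⊗[ℝ] A

def X : A := FreeAlgebra.ι ℝ 0
def Y : A := FreeAlgebra.ι ℝ 1

/-- Generator matrices used to define the noncommutative partial derivative `pd d`. -/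
def genMat (d i : Fin 2) : Matrix (Fin 2) (Fin 2) B :=
  !![(Algebra.TensorProduct.includeLeft : A →ₐ[ℝ] B) (FreeAlgebra.ι ℝ i), if i = d then 1 else 0;
     0, Algebra.TensorProduct.includeRight (FreeAlgebra.ι ℝ i)]

def Φmat (d : Fin 2) : A →ₐ[ℝ] Matrix (Fin 2) (Fin 2) B :=
  FreeAlgebra.lift ℝ (genMat d)

/-- The noncommutative partial derivative `∂_x` (for `d = 0`) resp. `∂_y` (for `d = 1`):
on a monomial it splits the word at each occurrence of the letter `d`. -/
def pd (d : Fin 2) (a : A) : B := Φmat d a 0 1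

/-- The subspace `[A,A]` spanned by commutators; `tr(A) = A/[A,A]` is the trace space. -/
def commSub : Submodule ℝ A := Submodule.span ℝ {p : A | ∃ a b : A, p = a * b - b * a}

/-- The trace projection `tr : A → A/[A,A]`. -/
def trc (a : A) : A ⧸ commSub := Submodule.Quotient.mk a

/-- Reversed multiplication `μ_flip : A ⊗ A → A`, `b ⊗ c ↦ c·b`. -/
def flipMul : B →ₗ[ℝ] A :=
  (LinearMap.mul' ℝ A).comp (TensorProduct.comm ℝ A A).toLinearMap

lemma phi_entries (d : Fin 2) (a : A) :
    Φmat d a 0 0 = Algebra.TensorProduct.includeLeft (R := ℝ) (S := ℝ) a ∧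
    Φmat d a 1 1 = Algebra.TensorProduct.includeRight (R := ℝ) a ∧
    Φmat d a 1 0 = 0 := by
  induction a using FreeAlgebra.induction with
  | grade0 r =>
    refine ⟨?_, ?_, ?_⟩ <;>
      simp [Matrix.algebraMap_matrix_apply, AlgHom.commutes]
  | grade1 i =>
    refine ⟨?_, ?_, ?_⟩ <;>
      simp [Φmat, FreeAlgebra.lift_ι_apply, genMat]
  | mul a b ha hb =>
    obtain ⟨ha0, ha1, ha2⟩ := ha
    obtain ⟨hb0, hb1, hb2⟩ := hb
    refine ⟨?_, ?_, ?_⟩ <;>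
      simp [map_mul, Matrix.mul_apply, Fin.sum_univ_two, ha0, ha1, ha2, hb0, hb1, hb2]
  | add a b ha hb =>
    obtain ⟨ha0, ha1, ha2⟩ := ha
    obtain ⟨hb0, hb1, hb2⟩ := hb
    refine ⟨?_, ?_, ?_⟩ <;>
      simp [map_add, Matrix.add_apply, ha0, ha1, ha2, hb0, hb1, hb2]

lemma pd_mul (d : Fin 2) (a b : A) :
    pd d (a * b) = (a ⊗ₜ[ℝ] 1) * pd d b + pd d a * (1 ⊗ₜ[ℝ] b) := by
  have ha := phi_entries d a
  have hb := phi_entries d b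
  simp only [pd, map_mul, Matrix.mul_apply, Fin.sum_univ_two, ha.1, hb.2.1, hb.2.2]
  simp [Algebra.TensorProduct.includeLeft_apply, Algebra.TensorProduct.includeRight_apply,
    mul_zero, add_comm]

lemma flipMul_tmul (p q : A) : flipMul (p ⊗ₜ[ℝ] q) = q * p := by
  simp [flipMul]

lemma flipMul_cyc (a : A) (t : B) :
    flipMul ((a ⊗ₜ[ℝ] 1) * t) = flipMul (t * (1 ⊗ₜ[ℝ] a)) := by
  induction t using TensorProduct.induction_on with
  | zero => simp
  | tmul p q =>
    simp [Algebra.TensorProduct.tmul_mul_tmul, flipMul_tmul, mul_assoc]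
  | add s t hs ht =>
    simp [add_mul, mul_add, map_add, hs, ht]

def Lmap : A →ₗ[ℝ] A where
  toFun a := flipMul (pd 0 a)
  map_add' a b := by simp [pd, map_add, Matrix.add_apply]
  map_smul' r a := by simp [pd, map_smul, Matrix.smul_apply]

lemma Lmap_comm (a b : A) : Lmap (a * b) = Lmap (b * a) := by
  show flipMul (pd 0 (a*b)) = flipMul (pd 0 (b*a))
  rw [pd_mul, pd_mul, map_add, map_add, flipMul_cyc a, flipMul_cyc b]
  exact add_comm _ _

theorem cyclic_derivative_well_defined :
    ∃ D : (A ⧸ commSub) →ₗ[ℝ] A, ∀ a : A, D (trc a) = flipMul (pd 0 a) := by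
  have hle : commSub ≤ LinearMap.ker Lmap := by
    rw [commSub, Submodule.span_le]
    rintro p ⟨a, b, rfl⟩
    simp [LinearMap.mem_ker, map_sub, Lmap_comm a b]
  exact ⟨commSub.liftQ Lmap hle, fun a => rfl⟩
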